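/- arXiv:1804.08556 — 2 statements merged into one kernel-verified Lean document; each statement's English description precedes it below -/
import Mathlib

section
/- Let d ∈ ℕ with d ≥ 1 and let a : ℕ → ℝ satisfy a(n) ≥ 0 for all n. Suppose that the limits L := lim_{N→∞} (1/|P ∩ [1,N]|)·Σ_{p ∈ P, p ≤ N} a(p) and L_d := lim_{N→∞} (1/|P_d ∩ [1,N]|)·Σ_{p ∈ P_d, p ≤ N} a(p) both exist. Then L_d ≤ φ(d)·L, where φ is Euler's totient function. -/
/-!
If `L_d > φ(d) L`, then since `a ≥ 0` and `P_d ⊆ P`, comparing the two averages gives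
`π_d(N) ≤ c π(N)` for all large `N`, with some `c < 1/φ(d)`. Partial summation against the
weight `log n / n ^ x`, which is decreasing for `n ≥ 3`, turns this into
`∑_{p ∈ P_d} log p / p ^ x ≤ c ∑_{p ∈ P} log p / p ^ x + O(1)` for `x > 1`. On the other hand the
analytic input of Dirichlet's theorem (continuity at `s = 1` of the logarithmic derivatives of the
`L`-functions mod `q`, once the pole of `ζ` is removed) gives
`∑_{p ≡ a (q)} log p / p ^ x = φ(q)⁻¹ / (x - 1) + O(1)` as `x → 1⁺`. Taking `q = d, a = 1` and
`q = 1` and letting `x → 1⁺` forces `1/φ(d) ≤ c`.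
-/

open Filter MeasureTheory
open scoped Topology ENNReal

/-- Real-valued average of `c` over the elements of `A` lying in `[1,N]`
(zero if there are none). -/
noncomputable def avgOnR (A : Set ℕ) (N : ℕ) (c : ℕ → ℝ) : ℝ :=
  (∑ p ∈ Finset.Icc 1 N, A.indicator (fun _ => (1 : ℝ)) p)⁻¹ *
    ∑ p ∈ Finset.Icc 1 N, A.indicator c p

/-- `P_d`: the set of primes congruent to `1` modulo `d`. -/
def primesMod1 (d : ℕ) : Set ℕ := {p | Nat.Prime p ∧ (p : ZMod d) = 1}

open Finset

namespace ArithmeticFunction.vonMangoldt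

open Complex LSeries

variable {q : ℕ}

lemma summable_residueClass_div_rpow (a : ZMod q) {x : ℝ} (hx : 1 < x) :
    Summable fun n : ℕ ↦ residueClass a n / (n : ℝ) ^ x :=
  summable_real_of_abscissaOfAbsConv_lt <|
    (abscissaOfAbsConv_residueClass_le_one a).trans_lt <| mod_cast hx

variable [NeZero q] {a : ZMod q}

lemma tsum_residueClass_div_rpow_eq (ha : IsUnit a) {x : ℝ} (hx : 1 < x) :
    ∑' n, residueClass a n / (n : ℝ) ^ x =
      (LFunctionResidueClassAux a x).re + (q.totient : ℝ)⁻¹ / (x - 1) := by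
  refine ofReal_injective ?_
  simp only [ofReal_tsum, ofReal_div, ofReal_cpow (Nat.cast_nonneg _), ofReal_natCast,
    ofReal_add, ofReal_inv, ofReal_sub, ofReal_one]
  simp_rw [← LFunctionResidueClassAux_real ha hx,
    eqOn_LFunctionResidueClassAux ha <| Set.mem_ofPred.mpr (ofReal_re x ▸ hx), sub_add_cancel,
    LSeries, LSeries.term]
  refine tsum_congr fun n ↦ ?_
  split_ifs with hn
  · simp only [hn, residueClass_apply_zero, ofReal_zero, zero_div]
  · rfl

lemma exists_abs_tsum_residueClass_div_rpow_sub_le (ha : IsUnit a) :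
    ∃ C : ℝ, ∀ x ∈ Set.Ioc (1 : ℝ) 2,
      |∑' n, residueClass a n / (n : ℝ) ^ x - (q.totient : ℝ)⁻¹ / (x - 1)| ≤ C := by
  have hcont : ContinuousOn (fun x : ℝ ↦ (LFunctionResidueClassAux a x).re) (Set.Icc 1 2) :=
    continuous_re.comp_continuousOn <| (continuousOn_LFunctionResidueClassAux a).comp
      continuous_ofReal.continuousOn fun x hx ↦ by simpa using hx.1
  obtain ⟨C, hC⟩ := isCompact_Icc.exists_bound_of_continuousOn hcont
  refine ⟨C, fun x hx ↦ ?_⟩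
  simpa [tsum_residueClass_div_rpow_eq ha hx.1] using hC x (Set.Ioc_subset_Icc_self hx)

end ArithmeticFunction.vonMangoldt

noncomputable def logWeight (x : ℝ) (n : ℕ) : ℝ := Real.log n / (n : ℝ) ^ x

lemma logWeight_nonneg (x : ℝ) (n : ℕ) : 0 ≤ logWeight x n :=
  div_nonneg (Real.log_natCast_nonneg n) (Real.rpow_nonneg n.cast_nonneg x)

lemma logWeight_le_log {x : ℝ} (hx : 0 ≤ x) (n : ℕ) : logWeight x n ≤ Real.log n := by
  rcases n with _ | n
  · simp [logWeight]
  · exact div_le_self (Real.log_natCast_nonneg _) (Real.one_le_rpow (by simp) hx)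

lemma antitone_logWeight_add_three {x : ℝ} (hx : 1 ≤ x) :
    Antitone fun k : ℕ ↦ logWeight x (k + 3) := by
  have h3 : ∀ k : ℕ, Real.exp x⁻¹ ≤ ((k + 3 : ℕ) : ℝ) := fun k ↦ by
    have : Real.exp x⁻¹ ≤ Real.exp 1 := Real.exp_le_exp.2 (inv_le_one_of_one_le₀ hx)
    push_cast
    linarith [Real.exp_one_lt_d9, (k.cast_nonneg : (0 : ℝ) ≤ k)]
  intro i j hij
  exact Real.log_div_self_rpow_antitoneOn (by linarith) (h3 i) (h3 j) (by gcongr)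

section residueClass

open ArithmeticFunction vonMangoldt

variable {q : ℕ}

lemma residueClass_div_rpow_eq (a : ZMod q) (x : ℝ) (n : ℕ) :
    residueClass a n / (n : ℝ) ^ x =
      {p : ℕ | p.Prime ∧ (p : ZMod q) = a}.indicator (logWeight x) n +
        (if n.Prime then 0 else residueClass a n) / (n : ℝ) ^ x := by
  by_cases hn : n.Prime
  · by_cases hna : (n : ZMod q) = a <;>
      simp [hn, hna, logWeight, vonMangoldt_apply_prime hn]
  · simp [hn]

lemma summable_indicator_logWeight (a : ZMod q) {x : ℝ} (hx : 1 < x) :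
    Summable ({p : ℕ | p.Prime ∧ (p : ZMod q) = a}.indicator (logWeight x)) := by
  refine (summable_residueClass_div_rpow a hx).of_nonneg_of_le
    (fun n ↦ Set.indicator_nonneg (fun n _ ↦ logWeight_nonneg x n) n) fun n ↦ ?_
  rw [residueClass_div_rpow_eq a x n, le_add_iff_nonneg_right]
  positivity [residueClass_nonneg a n]

theorem exists_abs_tsum_indicator_logWeight_sub_le [NeZero q] {a : ZMod q} (ha : IsUnit a) :
    ∃ C : ℝ, ∀ x ∈ Set.Ioc (1 : ℝ) 2,
      |∑' n, {p : ℕ | p.Prime ∧ (p : ZMod q) = a}.indicator (logWeight x) n -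
        (q.totient : ℝ)⁻¹ / (x - 1)| ≤ C := by
  obtain ⟨C, hC⟩ := exists_abs_tsum_residueClass_div_rpow_sub_le ha
  -- the proper prime powers contribute `E x`, which is dominated by its (finite) value at `x = 1`
  set E : ℝ → ℕ → ℝ := fun x n ↦ (if n.Prime then 0 else residueClass a n) / (n : ℝ) ^ x
  have hE_nonneg (x : ℝ) (n : ℕ) : 0 ≤ E x n := by positivity [residueClass_nonneg a n]
  have hE_le {x : ℝ} (hx : 1 ≤ x) (n : ℕ) :
      E x n ≤ (if n.Prime then 0 else residueClass a n) / (n : ℝ) := by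
    rcases n with _ | n
    · simp [E]
    · refine div_le_div_of_nonneg_left (by positivity [residueClass_nonneg a (n + 1)])
        (by positivity) ?_
      simpa using Real.self_le_rpow_of_one_le (by simp : (1 : ℝ) ≤ (n + 1 : ℕ)) hx
  refine ⟨C + ∑' n : ℕ, (if n.Prime then 0 else residueClass a n) / (n : ℝ), fun x hx ↦ ?_⟩
  have hE_summable : Summable (E x) :=
    (summable_residueClass_non_primes_div a).of_nonneg_of_le (hE_nonneg x) (hE_le hx.1.le)
  have hsplit : ∑' n, residueClass a n / (n : ℝ) ^ x =
      ∑' n, {p : ℕ | p.Prime ∧ (p : ZMod q) = a}.indicator (logWeight x) n + ∑' n, E x n := by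
    rw [← (summable_indicator_logWeight a hx.1).tsum_add hE_summable]
    exact tsum_congr (residueClass_div_rpow_eq a x)
  have hE : ∑' n, E x n ≤ ∑' n : ℕ, (if n.Prime then 0 else residueClass a n) / (n : ℝ) :=
    hE_summable.tsum_le_tsum (hE_le hx.1.le) (summable_residueClass_non_primes_div a)
  have hE0 : 0 ≤ ∑' n, E x n := tsum_nonneg (hE_nonneg x)
  have := abs_le.1 (hC x hx)
  rw [abs_le]
  constructor <;> linarith

end residueClass

lemma setOf_prime_and_eq_one_zmod_one :
    {p : ℕ | p.Prime ∧ (p : ZMod 1) = 1} = {p | p.Prime} := by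
  simp [Subsingleton.elim _ (1 : ZMod 1)]

lemma summable_primes_indicator_logWeight {x : ℝ} (hx : 1 < x) :
    Summable ({p : ℕ | p.Prime}.indicator (logWeight x)) :=
  setOf_prime_and_eq_one_zmod_one ▸ summable_indicator_logWeight (1 : ZMod 1) hx

lemma exists_tsum_primes_indicator_logWeight_le :
    ∃ C : ℝ, ∀ x ∈ Set.Ioc (1 : ℝ) 2,
      ∑' n, {p : ℕ | p.Prime}.indicator (logWeight x) n ≤ 1 / (x - 1) + C := by
  obtain ⟨C, hC⟩ := exists_abs_tsum_indicator_logWeight_sub_le (q := 1) isUnit_one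
  refine ⟨C, fun x hx ↦ ?_⟩
  have := (abs_le.1 (hC x hx)).2
  rw [setOf_prime_and_eq_one_zmod_one] at this
  simp only [Nat.totient_one, Nat.cast_one, inv_one] at this
  linarith

lemma exists_le_tsum_primesMod1_indicator_logWeight (d : ℕ) [NeZero d] :
    ∃ C : ℝ, ∀ x ∈ Set.Ioc (1 : ℝ) 2,
      (d.totient : ℝ)⁻¹ / (x - 1) - C ≤ ∑' n, (primesMod1 d).indicator (logWeight x) n := by
  obtain ⟨C, hC⟩ := exists_abs_tsum_indicator_logWeight_sub_le (q := d) isUnit_one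
  refine ⟨C, fun x hx ↦ ?_⟩
  unfold primesMod1
  linarith [(abs_le.1 (hC x hx)).1]

noncomputable def countOn (A : Set ℕ) (N : ℕ) : ℝ :=
  ∑ p ∈ Icc 1 N, A.indicator (fun _ ↦ (1 : ℝ)) p

section countOn

variable (A : Set ℕ)

lemma countOn_nonneg (N : ℕ) : 0 ≤ countOn A N :=
  sum_nonneg fun _ _ ↦ Set.indicator_nonneg (fun _ _ ↦ zero_le_one) _

lemma countOn_mono : Monotone (countOn A) := fun _ _ h ↦
  sum_le_sum_of_subset_of_nonneg (Icc_subset_Icc_right h)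
    fun _ _ _ ↦ Set.indicator_nonneg (fun _ _ ↦ zero_le_one) _

lemma countOn_two_le : countOn A 2 ≤ 2 := by
  calc countOn A 2 ≤ ∑ p ∈ Icc 1 2, (1 : ℝ) :=
        sum_le_sum fun _ _ ↦ Set.indicator_le_self' (fun _ _ ↦ zero_le_one) _
    _ = 2 := by simp

lemma countOn_add_two (m : ℕ) :
    countOn A (m + 2) = countOn A 2 + ∑ k ∈ range m, A.indicator (fun _ ↦ (1 : ℝ)) (k + 3) := by
  induction m with
  | zero => simp
  | succ m ih =>
    rw [sum_range_succ, ← add_assoc, ← ih, countOn, countOn, show m + 1 + 2 = m + 2 + 1 by ring,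
      sum_Icc_succ_top (by omega)]

lemma countOn_mul_avgOnR (N : ℕ) (c : ℕ → ℝ) :
    countOn A N * avgOnR A N c = ∑ p ∈ Icc 1 N, A.indicator c p := by
  by_cases h : countOn A N = 0
  · -- `avgOnR A N c` is the junk value `0⁻¹ * _`, but `A` misses `[1, N]`, so the sum is `0` too
    rw [h, zero_mul, eq_comm]
    refine sum_eq_zero fun p hp ↦ Set.indicator_of_notMem (fun hpA ↦ ?_) c
    have := (sum_eq_zero_iff_of_nonneg
      fun _ _ ↦ Set.indicator_nonneg (fun _ _ ↦ zero_le_one) _).1 h p hp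
    simp [hpA] at this
  · exact mul_inv_cancel_left₀ h _

end countOn

lemma exists_countOn_le_add_of_eventually {S T : Set ℕ} {c : ℝ} (hc : 0 ≤ c)
    (h : ∀ᶠ N in atTop, countOn S N ≤ c * countOn T N) :
    ∃ K : ℝ, ∀ N, countOn S N ≤ c * countOn T N + K := by
  obtain ⟨N₀, hN₀⟩ := eventually_atTop.1 h
  refine ⟨countOn S N₀, fun N ↦ ?_⟩
  have hT := mul_nonneg hc (countOn_nonneg T N)
  rcases le_total N₀ N with hN | hN
  · linarith [hN₀ N hN, countOn_nonneg S N₀]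
  · linarith [countOn_mono S hN]

lemma countOn_mul_le_of_le_avgOnR {S T : Set ℕ} (hST : S ⊆ T) {a : ℕ → ℝ} (ha : ∀ n, 0 ≤ a n)
    {N : ℕ} {α β : ℝ} (hS : α ≤ avgOnR S N a) (hT : avgOnR T N a ≤ β) :
    countOn S N * α ≤ countOn T N * β :=
  calc countOn S N * α ≤ countOn S N * avgOnR S N a := by gcongr; exact countOn_nonneg S N
    _ = ∑ p ∈ Icc 1 N, S.indicator a p := countOn_mul_avgOnR S N a
    _ ≤ ∑ p ∈ Icc 1 N, T.indicator a p :=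
        sum_le_sum fun p _ ↦ Set.indicator_le_indicator_of_subset hST ha p
    _ = countOn T N * avgOnR T N a := (countOn_mul_avgOnR T N a).symm
    _ ≤ countOn T N * β := by gcongr; exact countOn_nonneg T N

lemma avgOnR_nonneg (A : Set ℕ) (N : ℕ) {a : ℕ → ℝ} (ha : ∀ n, 0 ≤ a n) : 0 ≤ avgOnR A N a :=
  mul_nonneg (inv_nonneg.2 (countOn_nonneg A N))
    (sum_nonneg fun p _ ↦ Set.indicator_nonneg (fun n _ ↦ ha n) p)

theorem sum_range_mul_le_of_antitone {w f : ℕ → ℝ} {K : ℝ} (hf : Antitone f)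
    (hf₀ : ∀ n, 0 ≤ f n) (hw : ∀ m, ∑ k ∈ range m, w k ≤ K) (M : ℕ) :
    ∑ k ∈ range M, w k * f k ≤ K * f 0 := by
  -- summation by parts, kept as an inequality along the induction
  have key : ∀ M, ∑ k ∈ range M, w k * f k ≤ K * (f 0 - f M) + (∑ k ∈ range M, w k) * f M := by
    intro M
    induction M with
    | zero => simp
    | succ M ih =>
      rw [sum_range_succ, sum_range_succ]
      nlinarith [hw (M + 1), hf M.le_succ, sum_range_succ w M]
  nlinarith [key M, hw M, hf₀ M]

section transfer

variable {S T : Set ℕ} {c K : ℝ}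

lemma sum_range_indicator_logWeight_add_three_le (hc : 0 ≤ c)
    (hcount : ∀ N, countOn S N ≤ c * countOn T N + K) {x : ℝ} (hx : 1 ≤ x)
    (hT : Summable (T.indicator (logWeight x))) (M : ℕ) :
    ∑ k ∈ range M, S.indicator (logWeight x) (k + 3) ≤
      c * ∑' k, T.indicator (logWeight x) (k + 3) + (2 * c + K) * logWeight x 3 := by
  have hw (m : ℕ) : ∑ k ∈ range m, (S.indicator (fun _ ↦ (1 : ℝ)) (k + 3) -
      c * T.indicator (fun _ ↦ (1 : ℝ)) (k + 3)) ≤ 2 * c + K := by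
    have hS := countOn_add_two S m
    have hT := countOn_add_two T m
    rw [sum_sub_distrib, ← mul_sum]
    nlinarith [hcount (m + 2), countOn_nonneg S 2, countOn_two_le T]
  have hT' : Summable fun k ↦ T.indicator (logWeight x) (k + 3) := (summable_nat_add_iff 3).2 hT
  have habel := sum_range_mul_le_of_antitone (antitone_logWeight_add_three hx)
    (fun k ↦ logWeight_nonneg x (k + 3)) hw M
  have hsum : ∑ k ∈ range M, T.indicator (logWeight x) (k + 3) ≤
      ∑' k, T.indicator (logWeight x) (k + 3) :=
    hT'.sum_le_tsum _ fun k _ ↦ Set.indicator_nonneg (fun n _ ↦ logWeight_nonneg x n) _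
  simp only [sub_mul, mul_assoc, sum_sub_distrib, ← mul_sum, ← Set.indicator_mul_left,
    one_mul] at habel
  nlinarith

theorem exists_tsum_indicator_logWeight_le_of_countOn_le (hc : 0 ≤ c)
    (hcount : ∀ N, countOn S N ≤ c * countOn T N + K) :
    ∃ B : ℝ, ∀ x, 1 ≤ x → Summable (T.indicator (logWeight x)) →
      ∑' n, S.indicator (logWeight x) n ≤ c * ∑' n, T.indicator (logWeight x) n + B := by
  have hK : 0 ≤ K := by simpa [countOn] using hcount 0
  refine ⟨(2 * c + K) * Real.log 3 + ∑ n ∈ range 3, Real.log n, fun x hx hT ↦ ?_⟩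
  have hnonneg (A : Set ℕ) (n : ℕ) : 0 ≤ A.indicator (logWeight x) n :=
    Set.indicator_nonneg (fun n _ ↦ logWeight_nonneg x n) n
  have htail := sum_range_indicator_logWeight_add_three_le hc hcount hx hT
  have hS : Summable fun k ↦ S.indicator (logWeight x) (k + 3) :=
    summable_of_sum_range_le (fun k ↦ hnonneg S (k + 3)) htail
  have hS_tail := Real.tsum_le_of_sum_range_le (fun k ↦ hnonneg S (k + 3)) htail
  rw [← ((summable_nat_add_iff 3).1 hS).sum_add_tsum_nat_add 3,
    ← hT.sum_add_tsum_nat_add 3]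
  have hS_head : ∑ n ∈ range 3, S.indicator (logWeight x) n ≤ ∑ n ∈ range 3, Real.log n :=
    sum_le_sum fun n _ ↦ (Set.indicator_le_self' (fun n _ ↦ logWeight_nonneg x n) n).trans
      (logWeight_le_log (by linarith) n)
  have hT_head : 0 ≤ ∑ n ∈ range 3, T.indicator (logWeight x) n :=
    sum_nonneg fun n _ ↦ hnonneg T n
  have h3 : (2 * c + K) * logWeight x 3 ≤ (2 * c + K) * Real.log 3 :=
    mul_le_mul_of_nonneg_left (by exact_mod_cast logWeight_le_log (by linarith) 3) (by positivity)
  nlinarith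

end transfer

lemma nonpos_of_forall_div_sub_one_le {a D : ℝ} (h : ∀ x ∈ Set.Ioc (1 : ℝ) 2, a / (x - 1) ≤ D) :
    a ≤ 0 := by
  by_contra! ha
  set t := min 1 (a / (|D| + 1))
  have ht : 0 < t := lt_min one_pos (by positivity)
  have htD : t * (|D| + 1) ≤ a := (le_div_iff₀ (by positivity)).1 (min_le_right _ _)
  have := h (1 + t) ⟨by linarith, by linarith [min_le_left 1 (a / (|D| + 1))]⟩
  rw [add_sub_cancel_left, div_le_iff₀ ht] at this
  nlinarith [le_abs_self D]

theorem inv_totient_le_of_eventually_countOn_le (d : ℕ) [NeZero d] {c : ℝ} (hc : 0 ≤ c)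
    (h : ∀ᶠ N in atTop, countOn (primesMod1 d) N ≤ c * countOn {p | p.Prime} N) :
    (d.totient : ℝ)⁻¹ ≤ c := by
  obtain ⟨K, hK⟩ := exists_countOn_le_add_of_eventually hc h
  obtain ⟨B, hB⟩ := exists_tsum_indicator_logWeight_le_of_countOn_le hc hK
  obtain ⟨C₁, hC₁⟩ := exists_le_tsum_primesMod1_indicator_logWeight d
  obtain ⟨C₂, hC₂⟩ := exists_tsum_primes_indicator_logWeight_le
  rw [← sub_nonpos]
  refine nonpos_of_forall_div_sub_one_le (D := C₁ + c * C₂ + B) fun x hx ↦ ?_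
  have hcompare := hB x hx.1.le (summable_primes_indicator_logWeight hx.1)
  have hupper := mul_le_mul_of_nonneg_left (hC₂ x hx) hc
  have hlower := hC₁ x hx
  rw [mul_add, mul_one_div] at hupper
  rw [sub_div]
  linarith

/-- Lemma 4.4: for a nonnegative sequence, the average over primes `p ≡ 1 (mod d)` is at most
`φ(d)` times the average over all primes. -/
theorem avg_over_progression_primes_le_totient_mul_avg
    (d : ℕ) (hd : 1 ≤ d) (a : ℕ → ℝ) (ha : ∀ n, 0 ≤ a n) (L Ld : ℝ)
    (hL : Tendsto (fun N => avgOnR {p | Nat.Prime p} N a) atTop (nhds L))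
    (hLd : Tendsto (fun N => avgOnR (primesMod1 d) N a) atTop (nhds Ld)) :
    Ld ≤ (Nat.totient d : ℝ) * L := by
  have : NeZero d := ⟨by omega⟩
  have hφ : 0 < (d.totient : ℝ) := by exact_mod_cast Nat.totient_pos.2 (by omega)
  have hL₀ : 0 ≤ L := ge_of_tendsto' hL fun N ↦ avgOnR_nonneg _ N ha
  have hclose (ε : ℝ) (hε : 0 < ε) : Ld - ε ≤ d.totient * (L + ε) := by
    rcases le_or_gt (Ld - ε) 0 with h | h
    · nlinarith
    have hcount : ∀ᶠ N in atTop, countOn (primesMod1 d) N ≤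
        (L + ε) / (Ld - ε) * countOn {p | p.Prime} N := by
      filter_upwards [hLd.eventually_const_le (by linarith : Ld - ε < Ld),
        hL.eventually_le_const (by linarith : L < L + ε)] with N hN_d hN
      rw [div_mul_eq_mul_div, le_div_iff₀ h]
      linarith [countOn_mul_le_of_le_avgOnR (fun p hp ↦ hp.1) ha hN_d hN]
    have := inv_totient_le_of_eventually_countOn_le d (by positivity) hcount
    rwa [inv_le_iff_one_le_mul₀' hφ, mul_div_assoc', le_div_iff₀ h, one_mul] at this
  refine ge_of_tendsto (f := fun ε ↦ d.totient * (L + ε) + ε) (x := 𝓝[>] 0) ?_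
    (eventually_nhdsWithin_of_forall fun ε hε ↦ by linarith [hclose ε hε])
  exact tendsto_nhdsWithin_of_tendsto_nhds (Continuous.tendsto' (by fun_prop) _ _ (by simp))
end

section
/- Let t ∈ ℝ with t ≠ 0, let m ∈ ℕ, let h_1, …, h_m be nonnegative integers, and let k_1, …, k_m ∈ ℤ. Then lim_{N→∞} (1/log N)·Σ_{n=1}^N (1/n)·∏_{j=1}^m exp(i·t·k_j·log(n+h_j)) equals 1 if k_1 + ⋯ + k_m = 0, and equals 0 otherwise. In particular, lim_{N→∞} (1/log N)·Σ_{n=1}^N n^{it}/n = 0 for every nonzero real t. -/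
/-!
Since `∑_{n ≤ N} 1/n ~ log N`, logarithmic averages do not see null perturbations: if `a` is
bounded and `ε n → 1`, then `a * ε` has the same logarithmic averages as `a`. As
`log (n + h) - log n → 0`, the product of phases is `n^{i t ∑ k_j}` times such a factor `ε n`.
For `c ≠ 0` with `re c ≤ 0` the partial sums of `n^{c-1}` stay bounded, because by Taylor's
theorem each term is within `‖c - 1‖ / n²` of `(n + 1)^c / c - n^c / c`, which telescopes; hence
the logarithmic averages of `n^c` tend to `0`.
-/

open Filter MeasureTheory
open scoped Topology ENNReal

/-- Logarithmic average of `b` up to `N`: `(1/log N) * ∑_{n=1}^N b(n)/n`. -/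
noncomputable def logAvg (N : ℕ) (b : ℕ → ℂ) : ℂ :=
  (Real.log N : ℂ)⁻¹ * ∑ n ∈ Finset.Icc 1 N, (n : ℂ)⁻¹ * b n

open Finset Asymptotics

theorem logAvg_congr {N : ℕ} {a b : ℕ → ℂ} (h : ∀ n, 1 ≤ n → a n = b n) :
    logAvg N a = logAvg N b := by
  unfold logAvg
  congr 1
  exact sum_congr rfl fun n hn => by rw [h n (mem_Icc.1 hn).1]

theorem logAvg_add (N : ℕ) (a b : ℕ → ℂ) : logAvg N (a + b) = logAvg N a + logAvg N b := by
  simp only [logAvg, Pi.add_apply, mul_add, sum_add_distrib]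

theorem logAvg_const (N : ℕ) (c : ℂ) :
    logAvg N (fun _ => c) = ((harmonic N / Real.log N : ℝ) : ℂ) * c := by
  simp only [logAvg, ← sum_mul, harmonic_eq_sum_Icc]
  push_cast
  ring

theorem tendsto_harmonic_div_log :
    Tendsto (fun N : ℕ => (harmonic N : ℝ) / Real.log N) atTop (𝓝 1) := by
  have hlog : Tendsto (fun N : ℕ => Real.log N) atTop atTop :=
    Real.tendsto_log_atTop.comp tendsto_natCast_atTop_atTop
  have := (Real.tendsto_harmonic_sub_log.div_atTop hlog).const_add 1
  rw [add_zero] at this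
  refine this.congr' ?_
  filter_upwards [hlog.eventually_gt_atTop 0] with N hN
  field_simp
  ring

theorem tendsto_logAvg_const (c : ℂ) : Tendsto (fun N => logAvg N fun _ => c) atTop (𝓝 c) := by
  simp only [logAvg_const]
  simpa using (Complex.continuous_ofReal.tendsto _ |>.comp tendsto_harmonic_div_log).mul_const c

theorem sum_Icc_one_eq_sum_range_succ {M : Type*} [AddCommMonoid M] {f : ℕ → M} (hf : f 0 = 0)
    (N : ℕ) : ∑ n ∈ Icc 1 N, f n = ∑ n ∈ range (N + 1), f n := by
  refine sum_subset (fun n hn => ?_) fun n hn hn' => ?_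
  · simp only [mem_Icc, mem_range] at hn ⊢
    omega
  · obtain rfl : n = 0 := by simp only [mem_Icc, mem_range] at hn hn'; omega
    exact hf

theorem isLittleO_sum_Icc_inv_mul_log {e : ℕ → ℂ} (he : Tendsto e atTop (𝓝 0)) :
    (fun N : ℕ => ∑ n ∈ Icc 1 N, (n : ℂ)⁻¹ * e n) =o[atTop] fun N : ℕ => (Real.log N : ℂ) := by
  have hterm : (fun n : ℕ => (n : ℂ)⁻¹ * e n) =o[atTop] fun n : ℕ => (n : ℝ)⁻¹ := by
    have he' : (fun n => ‖e n‖) =o[atTop] fun _ => (1 : ℝ) :=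
      (isLittleO_one_iff ℝ).2 (by simpa using he.norm)
    refine isLittleO_norm_left.1 ?_
    simpa using (isBigO_refl (fun n : ℕ => (n : ℝ)⁻¹) atTop).mul_isLittleO he'
  have hharm : ∀ N : ℕ, ∑ n ∈ range (N + 1), (n : ℝ)⁻¹ = harmonic N := by
    intro N
    rw [← sum_Icc_one_eq_sum_range_succ (by simp), harmonic_eq_sum_Icc]
    push_cast
    rfl
  have hdiv : Tendsto (fun N : ℕ => ∑ n ∈ range N, (n : ℝ)⁻¹) atTop atTop := by
    rw [← tendsto_add_atTop_iff_nat 1]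
    simp only [hharm]
    exact tendsto_atTop_mono log_add_one_le_harmonic <| Real.tendsto_log_atTop.comp <|
      tendsto_natCast_atTop_atTop.comp (tendsto_add_atTop_nat 1)
  have hlog : (fun N : ℕ => (harmonic N : ℝ)) =O[atTop] fun N : ℕ => (Real.log N : ℂ) := by
    refine isBigO_norm_right.1 ?_
    simp only [Complex.norm_real]
    refine isBigO_norm_right.2 (isBigO_of_div_tendsto_nhds ?_ 1 tendsto_harmonic_div_log)
    filter_upwards [eventually_gt_atTop 1] with N hN h0
    exact absurd h0 (Real.log_pos (by exact_mod_cast hN)).ne'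
  have hsum := (hterm.sum_range (fun n => by positivity) hdiv).comp_tendsto
    (tendsto_add_atTop_nat 1)
  refine (hsum.congr (fun N => ?_) fun N => hharm N).trans_isBigO hlog
  exact (sum_Icc_one_eq_sum_range_succ (by simp) N).symm

theorem tendsto_logAvg_of_tendsto_zero {e : ℕ → ℂ} (he : Tendsto e atTop (𝓝 0)) :
    Tendsto (fun N => logAvg N e) atTop (𝓝 0) := by
  simpa only [logAvg, div_eq_inv_mul] using
    (isLittleO_sum_Icc_inv_mul_log he).tendsto_div_nhds_zero

theorem tendsto_logAvg_mul_of_tendsto_one {a ε : ℕ → ℂ} {L : ℂ}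
    (ha : Tendsto (fun N => logAvg N a) atTop (𝓝 L))
    (ha_bdd : IsBoundedUnder (· ≤ ·) atTop fun n => ‖a n‖) (hε : Tendsto ε atTop (𝓝 1)) :
    Tendsto (fun N => logAvg N (a * ε)) atTop (𝓝 L) := by
  have hsplit : a * ε = a + fun n => a n * (ε n - 1) := by
    ext n
    simp only [Pi.mul_apply, Pi.add_apply]
    ring
  have hnull := isBoundedUnder_le_mul_tendsto_zero ha_bdd (tendsto_sub_nhds_zero_iff.2 hε)
  simpa only [hsplit, logAvg_add, add_zero] using ha.add (tendsto_logAvg_of_tendsto_zero hnull)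

theorem norm_image_sub_sub_smul_le_of_hasDerivAt {E : Type*} [NormedAddCommGroup E]
    [NormedSpace ℝ E] {F f f' : ℝ → E} {a b C : ℝ} (hab : a ≤ b)
    (hF : ∀ x ∈ Set.Icc a b, HasDerivAt F (f x) x)
    (hf : ∀ x ∈ Set.Icc a b, HasDerivAt f (f' x) x)
    (bound : ∀ x ∈ Set.Icc a b, ‖f' x‖ ≤ C) :
    ‖F b - F a - (b - a) • f a‖ ≤ C * (b - a) ^ 2 := by
  have hf_near : ∀ x ∈ Set.Ico a b, ‖f x - f a‖ ≤ C * (b - a) := fun x hx =>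
    (norm_image_sub_le_of_norm_deriv_le_segment' (fun y hy => (hf y hy).hasDerivWithinAt)
      (fun y hy => bound y (Set.Ico_subset_Icc_self hy)) x (Set.Ico_subset_Icc_self hx)).trans
      (mul_le_mul_of_nonneg_left (by linarith [hx.2])
        ((norm_nonneg _).trans (bound a ⟨le_rfl, hab⟩)))
  have hG : ∀ x ∈ Set.Icc a b,
      HasDerivWithinAt (fun y => F y - y • f a) (f x - f a) (Set.Icc a b) x := fun x hx => by
    have := ((hF x hx).sub ((hasDerivAt_id x).smul_const (f a))).hasDerivWithinAt
      (s := Set.Icc a b)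
    rwa [one_smul] at this
  have := norm_image_sub_le_of_norm_deriv_le_segment' hG hf_near b ⟨hab, le_rfl⟩
  rw [sq, ← mul_assoc]
  convert this using 2
  rw [sub_smul]
  abel

theorem norm_ofReal_cpow_le_one {c : ℂ} (hre : c.re ≤ 0) {x : ℝ} (hx : 1 ≤ x) :
    ‖(x : ℂ) ^ c‖ ≤ 1 := by
  rw [Complex.norm_cpow_eq_rpow_re_of_pos (by linarith)]
  exact Real.rpow_le_one_of_one_le_of_nonpos hx hre

theorem isBoundedUnder_norm_natCast_cpow {c : ℂ} (hre : c.re ≤ 0) :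
    IsBoundedUnder (· ≤ ·) atTop fun n : ℕ => ‖(n : ℂ) ^ c‖ :=
  isBoundedUnder_of_eventually_le (a := 1) <| (eventually_ge_atTop 1).mono fun n hn => by
    simpa using norm_ofReal_cpow_le_one hre (by exact_mod_cast hn : (1 : ℝ) ≤ n)

theorem norm_cpow_div_sub_cpow_div_sub_cpow_sub_one_le {c : ℂ} (hc : c ≠ 0) (hre : c.re ≤ 0)
    {x : ℝ} (hx : 1 ≤ x) :
    ‖((x + 1 : ℝ) : ℂ) ^ c / c - (x : ℂ) ^ c / c - (x : ℂ) ^ (c - 1)‖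
      ≤ ‖c - 1‖ * (x ^ 2)⁻¹ := by
  have hc1 : c - 1 ≠ 0 := fun h => by norm_num [sub_eq_zero.1 h] at hre
  have key := norm_image_sub_sub_smul_le_of_hasDerivAt (C := ‖c - 1‖ * (x ^ 2)⁻¹)
    (F := fun y : ℝ => (y : ℂ) ^ c / c) (f := fun y : ℝ => (y : ℂ) ^ (c - 1))
    (f' := fun y : ℝ => (c - 1) * (y : ℂ) ^ (c - 1 - 1)) (by linarith : x ≤ x + 1)
    (fun y hy => by
      simpa using hasDerivAt_ofReal_cpow_const' (by linarith [hy.1] : y ≠ 0) (r := c - 1)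
        (by simpa [sub_eq_neg_self] using hc))
    (fun y hy => hasDerivAt_ofReal_cpow_const (by linarith [hy.1] : y ≠ 0) hc1)
    (fun y hy => by
      have hy0 : 0 < y := by linarith [hy.1]
      rw [norm_mul, Complex.norm_cpow_eq_rpow_re_of_pos hy0]
      gcongr
      have hre2 : (c - 1 - 1).re ≤ -2 := by
        simp only [Complex.sub_re, Complex.one_re]
        linarith
      calc y ^ (c - 1 - 1).re ≤ x ^ (c - 1 - 1).re :=
            Real.rpow_le_rpow_of_nonpos (by linarith) hy.1 (by linarith)
        _ ≤ x ^ (-2 : ℝ) := Real.rpow_le_rpow_of_exponent_le hx hre2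
        _ = (x ^ 2)⁻¹ := by
          rw [Real.rpow_neg (by linarith)]
          norm_cast)
  simpa using key

theorem isBigO_sum_Icc_cpow_sub_one {c : ℂ} (hc : c ≠ 0) (hre : c.re ≤ 0) :
    (fun N : ℕ => ∑ n ∈ Icc 1 N, (n : ℂ) ^ (c - 1)) =O[atTop] fun _ => (1 : ℂ) := by
  set F : ℕ → ℂ := fun n => ((n : ℝ) : ℂ) ^ c / c
  have hF : ∀ n, 1 ≤ n → ‖F n‖ ≤ ‖c‖⁻¹ := fun n hn => by
    rw [norm_div, div_eq_mul_inv]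
    exact mul_le_of_le_one_left (by positivity)
      (norm_ofReal_cpow_le_one hre (by exact_mod_cast hn))
  have hsum : Summable fun n : ℕ => ((n : ℝ) ^ 2)⁻¹ := Real.summable_nat_pow_inv.2 one_lt_two
  refine (isBigO_one_iff ℂ).2 ⟨2 * ‖c‖⁻¹ + ‖c - 1‖ * ∑' n : ℕ, ((n : ℝ) ^ 2)⁻¹,
    eventually_map.2 (Eventually.of_forall fun N => ?_)⟩
  have htel : ∑ n ∈ Icc 1 N, (F (n + 1) - F n) = F (N + 1) - F 1 := by
    rw [← Ico_add_one_right_eq_Icc, sum_Ico_sub F (by omega)]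
  have herr : ‖∑ n ∈ Icc 1 N, (F (n + 1) - F n - (n : ℂ) ^ (c - 1))‖
      ≤ ‖c - 1‖ * ∑' n : ℕ, ((n : ℝ) ^ 2)⁻¹ := by
    refine (norm_sum_le_of_le _ (n := fun n : ℕ => ‖c - 1‖ * ((n : ℝ) ^ 2)⁻¹)
      fun n hn => ?_).trans ?_
    · simpa [F] using norm_cpow_div_sub_cpow_div_sub_cpow_sub_one_le hc hre
        (by exact_mod_cast (mem_Icc.1 hn).1 : (1 : ℝ) ≤ n)
    · rw [← mul_sum]
      exact mul_le_mul_of_nonneg_left (hsum.sum_le_tsum _ fun n _ => by positivity)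
        (norm_nonneg _)
  have hsplit : ∑ n ∈ Icc 1 N, (n : ℂ) ^ (c - 1)
      = F (N + 1) - F 1 - ∑ n ∈ Icc 1 N, (F (n + 1) - F n - (n : ℂ) ^ (c - 1)) := by
    rw [← htel, ← sum_sub_distrib]
    simp
  calc ‖∑ n ∈ Icc 1 N, (n : ℂ) ^ (c - 1)‖
      ≤ ‖F (N + 1)‖ + ‖F 1‖ + ‖∑ n ∈ Icc 1 N, (F (n + 1) - F n - (n : ℂ) ^ (c - 1))‖ := by
        rw [hsplit]
        exact (norm_sub_le _ _).trans (by gcongr; exact norm_sub_le _ _)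
    _ ≤ 2 * ‖c‖⁻¹ + ‖c - 1‖ * ∑' n : ℕ, ((n : ℝ) ^ 2)⁻¹ := by
        linarith [hF (N + 1) (by omega), hF 1 le_rfl]

theorem tendsto_logAvg_cpow {c : ℂ} (hc : c ≠ 0) (hre : c.re ≤ 0) :
    Tendsto (fun N => logAvg N fun n => (n : ℂ) ^ c) atTop (𝓝 0) := by
  have hlog : (fun _ => (1 : ℂ)) =o[atTop] fun N : ℕ => (Real.log N : ℂ) := by
    refine (isLittleO_one_left_iff ℂ).2 ?_
    simpa only [Complex.norm_real, Function.comp_def] using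
      tendsto_norm_atTop_atTop.comp (Real.tendsto_log_atTop.comp tendsto_natCast_atTop_atTop)
  have := ((isBigO_sum_Icc_cpow_sub_one hc hre).trans_isLittleO hlog).tendsto_div_nhds_zero
  refine this.congr fun N => ?_
  rw [logAvg, div_eq_inv_mul]
  congr 1
  refine sum_congr rfl fun n hn => ?_
  have hn0 : (n : ℂ) ≠ 0 := Nat.cast_ne_zero.2 (by have := (mem_Icc.1 hn).1; omega)
  rw [Complex.cpow_sub _ _ hn0, Complex.cpow_one, div_eq_inv_mul]

theorem prod_cexp_mul_log_add {ι : Type*} (s : Finset ι) (w : ι → ℂ) (h : ι → ℝ) {x : ℝ}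
    (hx : 0 < x) :
    ∏ j ∈ s, Complex.exp (w j * Real.log (x + h j)) =
      (x : ℂ) ^ (∑ j ∈ s, w j) *
        ∏ j ∈ s, Complex.exp (w j * ↑(Real.log (x + h j) - Real.log x)) := by
  rw [Complex.cpow_def_of_ne_zero (by exact_mod_cast hx.ne'), ← Complex.ofReal_log hx.le,
    ← Complex.exp_sum, ← Complex.exp_sum, ← Complex.exp_add, mul_sum, ← sum_add_distrib]
  congr 1
  refine sum_congr rfl fun j _ => ?_
  push_cast
  ring

theorem tendsto_prod_cexp_mul_log_add_sub_log {ι : Type*} (s : Finset ι) (w : ι → ℂ)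
    (h : ι → ℝ) :
    Tendsto (fun x : ℝ => ∏ j ∈ s, Complex.exp (w j * ↑(Real.log (x + h j) - Real.log x)))
      atTop (𝓝 1) := by
  simpa using tendsto_finsetProd s fun j _ =>
    ((Complex.continuous_exp.comp (continuous_const.mul Complex.continuous_ofReal)).tendsto' 0 1
      (by simp)).comp (Real.tendsto_log_comp_add_sub_log (h j))

/-- The logarithmic averages of products of archimedean phases `exp(i t k_j log(n+h_j))`
converge to `1` if `k₁ + ⋯ + k_m = 0` and to `0` otherwise; in particular
`E^log n^{it} = 0` for `t ≠ 0`. -/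
theorem log_averages_of_archimedean_characters
    (t : ℝ) (ht : t ≠ 0) (m : ℕ) (h : Fin m → ℕ) (k : Fin m → ℤ) :
    Tendsto (fun N => logAvg N fun n =>
        ∏ j, Complex.exp (Complex.I * t * (k j : ℂ) * Real.log ((n : ℝ) + (h j : ℝ))))
      atTop (nhds (if (∑ j, k j) = 0 then 1 else 0)) ∧
    Tendsto (fun N => logAvg N fun n => Complex.exp (Complex.I * t * Real.log (n : ℝ)))
      atTop (nhds 0) := by
  have hphase : ∀ s : ℝ, s ≠ 0 →
      Tendsto (fun N => logAvg N fun n => (n : ℂ) ^ (Complex.I * s)) atTop (𝓝 0) :=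
    fun s hs => tendsto_logAvg_cpow (by simpa using hs) (by simp)
  refine ⟨?_, (hphase t ht).congr fun N => logAvg_congr fun n hn => ?_⟩
  · set u := ∑ j, k j
    have hexp : ∑ j, Complex.I * t * (k j : ℂ) = Complex.I * ↑(t * u) := by
      rw [← mul_sum, Complex.ofReal_mul, Complex.ofReal_intCast, Int.cast_sum, mul_assoc]
    have hlim : Tendsto (fun N => logAvg N fun n => (n : ℂ) ^ (Complex.I * ↑(t * u))) atTop
        (𝓝 (if u = 0 then 1 else 0)) := by
      split_ifs with hu
      · simpa [hu] using tendsto_logAvg_const 1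
      · exact hphase _ (mul_ne_zero ht (Int.cast_ne_zero.2 hu))
    refine (tendsto_logAvg_mul_of_tendsto_one hlim (isBoundedUnder_norm_natCast_cpow (by simp))
      ((tendsto_prod_cexp_mul_log_add_sub_log univ (fun j => Complex.I * t * (k j : ℂ))
        fun j => (h j : ℝ)).comp tendsto_natCast_atTop_atTop)).congr
      fun N => logAvg_congr fun n hn => ?_
    rw [Pi.mul_apply, Function.comp_apply, ← hexp, ← Complex.ofReal_natCast,
      ← prod_cexp_mul_log_add _ _ _ (by exact_mod_cast hn)]
  · rw [Complex.cpow_def_of_ne_zero (by exact_mod_cast (by omega : n ≠ 0)),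
      ← Complex.natCast_log, mul_comm]
end
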